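/- arXiv:1401.6486 — 8 statements merged into one kernel-verified Lean document; each statement's English description precedes it below -/
import Mathlib

section
/- Let char k ≠ 2 and let (R, m) be a local symmetric k-algebra with R/m ≅ k, with symmetric form B. If B'(r,s) = B(r,su) for a unit u, then B and B' are homothetic if and only if u is central in R. -/
/-- Two forms are homothetic if one is obtained from the other by a nonzero scalar
and a change of basis. -/
def Homothetic {k R : Type*} [Field k] [Ring R] [Algebra k R]
    (B B' : LinearMap.BilinForm k R) : Prop :=
  ∃ α : k, α ≠ 0 ∧ ∃ V : R ≃ₗ[k] R, ∀ r s : R, B' r s = α * B (V r) (V s)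

/-!
A form homothetic to a symmetric form is symmetric, and `B(r, s u) = B(s, r u) = B(r, u s)`
for all `r` forces `s u = u s` by nondegeneracy. Conversely, if `u` is central and `α = ε u`,
then `α⁻¹ u` is central and lies in `1 + m`, so it is `1` plus a nilpotent. Newton iteration
in the (commutative) centre, where `2` is invertible, gives a central unit `y` with
`y ^ 2 = α⁻¹ u`, and right multiplication by `y` is the change of basis:
`α B(r y, s y) = α B(r, s y ^ 2) = B(r, s u)`.
-/

open Polynomial

theorem exists_isUnit_sq_eq_of_isNilpotent_sub_one {S : Type*} [CommRing S]
    (h2 : IsUnit (2 : S)) {a : S} (ha : IsNilpotent (a - 1)) :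
    ∃ y : S, IsUnit y ∧ y ^ 2 = a := by
  have hP : IsNilpotent (aeval (1 : S) (X ^ 2 - C a)) := by
    rw [map_sub, aeval_X_pow, aeval_C, one_pow, Algebra.algebraMap_self_apply, ← neg_sub]
    exact ha.neg
  have hP' : IsUnit (aeval (1 : S) (derivative (X ^ 2 - C a))) := by
    convert h2 using 1
    simp [one_add_one_eq_two]
  obtain ⟨y, ⟨hy1, hy⟩, -⟩ := existsUnique_nilpotent_sub_and_aeval_eq_zero hP hP'
  refine ⟨y, ?_, ?_⟩
  · simpa using hy1.isUnit_one_sub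
  · simpa [sub_eq_zero] using hy

section Algebra

variable {k R : Type*} [Field k] [Ring R] [Algebra k R]

theorem isNilpotent_of_algHom_apply_eq_zero [Algebra.IsIntegral k R] (ε : R →ₐ[k] k)
    (hunit : ∀ x : R, ε x ≠ 0 → IsUnit x) {x : R} (hx : ε x = 0) : IsNilpotent x := by
  obtain ⟨q, hq, hXq⟩ := (minpoly k x).exists_eq_pow_rootMultiplicity_mul_and_not_dvd
    (minpoly.ne_zero (Algebra.IsIntegral.isIntegral x)) 0
  have hq0 : ε (aeval x q) ≠ 0 := by
    rw [← aeval_algHom_apply, hx, ← coeff_zero_eq_aeval_zero]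
    simpa [X_dvd_iff] using hXq
  refine ⟨(minpoly k x).rootMultiplicity 0, ?_⟩
  have := (congrArg (aeval x) hq).symm
  rw [minpoly.aeval, map_mul, (hunit _ hq0).mul_left_eq_zero] at this
  simpa using this

theorem exists_unit_mem_center_sq_eq (h2 : (2 : k) ≠ 0) {a : R} (ha : a ∈ Set.center R)
    (hnil : IsNilpotent (a - 1)) : ∃ y : Rˣ, ↑y ∈ Set.center R ∧ (y : R) ^ 2 = a := by
  let C := Subalgebra.center k R
  have hC2 : IsUnit (2 : C) := by
    simpa only [map_ofNat] using (Ne.isUnit h2).map (algebraMap k C)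
  have hnilC : IsNilpotent ((⟨a, ha⟩ : C) - 1) := by
    obtain ⟨n, hn⟩ := hnil
    exact ⟨n, Subtype.ext hn⟩
  obtain ⟨y, hyu, hy⟩ := exists_isUnit_sq_eq_of_isNilpotent_sub_one hC2 hnilC
  refine ⟨hyu.unit.map C.val, ?_, ?_⟩
  · exact y.2
  · simpa using congrArg Subtype.val hy

theorem Homothetic.isSymm {B B' : LinearMap.BilinForm k R} (h : Homothetic B B')
    (hB : B.IsSymm) : B'.IsSymm := by
  obtain ⟨α, -, V, hV⟩ := h
  exact ⟨fun r s ↦ by rw [hV, hV, hB.eq]⟩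

theorem mem_center_of_isSymm_mul_right {B : LinearMap.BilinForm k R} (hnd : B.Nondegenerate)
    (hassoc : ∀ r s t : R, B (r * s) t = B r (s * t)) (hsym : B.IsSymm) {u : R}
    (hu : ∀ r s : R, B r (s * u) = B s (r * u)) : u ∈ Set.center R := by
  refine Semigroup.mem_center_iff.mpr fun s ↦ sub_eq_zero.mp <| hnd.2 _ fun r ↦ ?_
  rw [map_sub, sub_eq_zero, hu, hsym.eq, hassoc]

theorem homothetic_of_forall_eq_mul_smul_sq {B B' : LinearMap.BilinForm k R}
    (hassoc : ∀ r s t : R, B (r * s) t = B r (s * t)) {α : k} (hα : α ≠ 0) (y : Rˣ)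
    (hy : ↑y ∈ Set.center R) (hB' : ∀ r s : R, B' r s = B r (s * (α • (y : R) ^ 2))) :
    Homothetic B B' := by
  refine ⟨α, hα, y.mulRightLinearEquiv k, fun r s ↦ ?_⟩
  rw [Units.mulRightLinearEquiv_apply, Units.mulRightLinearEquiv_apply, hassoc, hB',
    mul_smul_comm, map_smul, smul_eq_mul, ← mul_assoc, ← Semigroup.mem_center_iff.mp hy s,
    mul_assoc, sq]

end Algebra

/-- `R/m ≅ k` is encoded by `ε : R →ₐ[k] k`, whose kernel `m` is exactly the set of
non-units. -/
theorem stmt8 (k : Type*) [Field k] (h2 : (2 : k) ≠ 0)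
    (R : Type*) [Ring R] [Algebra k R] [FiniteDimensional k R]
    (ε : R →ₐ[k] k) (hlocal : ∀ x : R, IsUnit x ↔ ε x ≠ 0)
    (B : LinearMap.BilinForm k R) (hnd : B.Nondegenerate)
    (hassoc : ∀ r s t : R, B (r * s) t = B r (s * t))
    (hsym : ∀ r s : R, B r s = B s r)
    (u : Rˣ)
    (B' : LinearMap.BilinForm k R) (hB' : ∀ r s : R, B' r s = B r (s * u)) :
    Homothetic B B' ↔ (↑u : R) ∈ Set.center R := by
  refine ⟨fun h ↦ mem_center_of_isSymm_mul_right hnd hassoc ⟨hsym⟩ fun r s ↦ ?_, fun hu ↦ ?_⟩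
  · rw [← hB', ← hB', (h.isSymm ⟨hsym⟩).eq]
  set α := ε u
  have hα : α ≠ 0 := (u.isUnit.map ε).ne_zero
  have hcenter : α⁻¹ • (u : R) ∈ Set.center R := (Subalgebra.center k R).smul_mem hu α⁻¹
  have hnil : IsNilpotent (α⁻¹ • (u : R) - 1) :=
    isNilpotent_of_algHom_apply_eq_zero ε (fun x ↦ (hlocal x).mpr) <| by
      rw [map_sub, map_smul, map_one, smul_eq_mul, inv_mul_cancel₀ hα, sub_self]
  obtain ⟨y, hyc, hy⟩ := exists_unit_mem_center_sq_eq h2 hcenter hnil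
  exact homothetic_of_forall_eq_mul_smul_sq hassoc hα y hyc fun r s ↦ by
    rw [hB', hy, smul_inv_smul₀ hα]
end

section
/- Let char k ≠ 2 and let (R, m) be a local symmetric k-algebra with R/m ≅ k. Then all nondegenerate associative bilinear forms on R are pairwise homothetic if and only if R is commutative. -/
open Polynomial LinearMap

theorem IsLocalRing.of_isUnit_iff_map_ne_zero {R K : Type*} [Ring R] [Ring K] (f : R →+* K)
    (hf : ∀ x, IsUnit x ↔ f x ≠ 0) : IsLocalRing R := by
  have : Nontrivial R := ⟨0, 1, fun h ↦ (hf 0).mp (h ▸ isUnit_one) (map_zero f)⟩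
  refine .of_isUnit_or_isUnit_one_sub_self fun a ↦ ?_
  by_contra! h
  rw [hf, hf, map_sub, not_not, not_not] at h
  exact (hf 1).mp isUnit_one (by simpa [h.1] using h.2)

theorem IsLocalRing.mul_comm_of_isUnit_commute {R : Type*} [Ring R] [IsLocalRing R]
    (h : ∀ u : R, IsUnit u → ∀ r, u * r = r * u) (a b : R) : a * b = b * a := by
  rcases isUnit_or_isUnit_of_add_one (add_sub_cancel a 1) with ha | ha
  · exact h a ha b
  · simpa [sub_mul, mul_sub] using h _ ha b

theorem exists_mul_self_eq_one_add_of_isNilpotent {S : Type*} [CommRing S] (h2 : IsUnit (2 : S))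
    {n : S} (hn : IsNilpotent n) : ∃ v : Sˣ, (v : S) * v = 1 + n := by
  obtain ⟨r, ⟨hr, hsq⟩, -⟩ := existsUnique_nilpotent_sub_and_aeval_eq_zero
    (P := X ^ 2 - C (1 + n)) (x := (1 : S)) (by simpa using hn.neg)
    (by simpa [one_add_one_eq_two] using h2)
  refine ⟨hr.isUnit_one_sub.unit, ?_⟩
  rw [IsUnit.unit_spec, sub_sub_cancel, ← sq]
  simpa [sub_eq_zero] using hsq

theorem exists_smul_mul_self_of_isUnit {k R : Type*} [Field k] [CommRing R] [Algebra k R]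
    [FiniteDimensional k R] (h2 : (2 : k) ≠ 0) (ε : R →ₐ[k] k) (hε : ∀ x, IsUnit x ↔ ε x ≠ 0)
    {w : R} (hw : IsUnit w) : ∃ c : k, c ≠ 0 ∧ ∃ v : Rˣ, w = c • ((v : R) * v) := by
  have : IsLocalRing R := .of_isUnit_iff_map_ne_zero (ε : R →+* k) hε
  have : IsArtinianRing R := .of_finite k R
  have hc : ε w ≠ 0 := (hε w).mp hw
  have hn : ¬IsUnit ((ε w)⁻¹ • w - 1) := by
    simp [hε, inv_mul_cancel₀ hc]
  have h2R : IsUnit (2 : R) := (hε 2).mpr (by rwa [map_ofNat])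
  obtain ⟨v, hv⟩ := exists_mul_self_eq_one_add_of_isNilpotent h2R
    (Ring.KrullDimLE.isNilpotent_iff_mem_nonunits.mpr hn)
  refine ⟨ε w, hc, v, ?_⟩
  rw [hv, add_sub_cancel, smul_smul, mul_inv_cancel₀ hc, one_smul]

namespace LinearMap.BilinForm

variable {k R : Type*} [Field k] [Ring R] [Algebra k R]

theorem exists_eq_comp_mulLeft [FiniteDimensional k R] {B₀ B : LinearMap.BilinForm k R}
    (hB₀ : B₀.Nondegenerate) (hassoc₀ : ∀ r s t, B₀ (r * s) t = B₀ r (s * t))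
    (hassoc : ∀ r s t, B (r * s) t = B r (s * t)) : ∃ u : R, B = B₀ ∘ₗ mulLeft k u := by
  refine ⟨(B₀.toDual hB₀).symm (B 1), ext₂ fun r s ↦ ?_⟩
  rw [LinearMap.comp_apply, mulLeft_apply, hassoc₀, apply_toDual_symm_apply, ← hassoc, one_mul]

theorem nondegenerate_comp_mulLeft_iff [FiniteDimensional k R] {B : LinearMap.BilinForm k R}
    (hB : B.Nondegenerate) {u : R} : (B ∘ₗ mulLeft k u).Nondegenerate ↔ IsUnit u := by
  constructor
  · intro h
    have hinj : Function.Injective (mulLeft k u) :=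
      (injective_iff_map_eq_zero _).mpr fun x hx ↦ h.1 x fun y ↦ by simp [hx]
    exact IsUnit.isUnit_iff_mulLeft_bijective.mpr ⟨hinj, injective_iff_surjective.mp hinj⟩
  · intro hu
    refine ⟨fun x hx ↦ (hu.mul_right_eq_zero).mp (hB.1 _ hx), fun y hy ↦ hB.2 y fun x ↦ ?_⟩
    simpa [← mul_assoc] using hy (hu.unit⁻¹ * x)

theorem mul_comm_of_comp_mulLeft_apply_comm {B : LinearMap.BilinForm k R} (hB : B.SeparatingLeft)
    (hassoc : ∀ r s t, B (r * s) t = B r (s * t)) (hsym : ∀ r s, B r s = B s r) {u : R}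
    (hu : ∀ r s, B (u * r) s = B (u * s) r) (r : R) : u * r = r * u := by
  refine sub_eq_zero.mp (hB _ fun s ↦ ?_)
  rw [map_sub, LinearMap.sub_apply, sub_eq_zero, hu, hsym, ← hassoc]

end LinearMap.BilinForm

open LinearMap.BilinForm

theorem Homothetic.apply_comm {k R : Type*} [Field k] [Ring R] [Algebra k R]
    {B B' : LinearMap.BilinForm k R} (h : Homothetic B B') (hB : ∀ r s, B r s = B s r)
    (r s : R) : B' r s = B' s r := by
  obtain ⟨α, -, V, hV⟩ := h
  rw [hV, hV, hB]

theorem homothetic_comp_mulLeft_mul_smul_mul_self {k R : Type*} [Field k] [CommRing R]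
    [Algebra k R] {B : LinearMap.BilinForm k R} (hassoc : ∀ r s t, B (r * s) t = B r (s * t))
    (u : R) {c : k} (hc : c ≠ 0) (v : Rˣ) :
    Homothetic (B ∘ₗ mulLeft k u) (B ∘ₗ mulLeft k (u * (c • ((v : R) * v)))) := by
  refine ⟨c, hc, v.mulLeftLinearEquiv k R, fun r s ↦ ?_⟩
  simp only [LinearMap.comp_apply, mulLeft_apply, Units.mulLeftLinearEquiv_apply, mul_smul_comm,
    smul_mul_assoc, map_smul, LinearMap.smul_apply]
  rw [← hassoc]
  congr 3
  ring

/-- Let `char k ≠ 2` and `(R, m)` be a local symmetric `k`-algebra with `R/m ≅ k`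
(encoded by `ε : R →ₐ[k] k` with units exactly the elements outside `m = ker ε`;
symmetric means `R` carries a nondegenerate associative symmetric form `B₀`).
Then all nondegenerate associative bilinear forms on `R` are pairwise homothetic
iff `R` is commutative. -/
theorem stmt10 (k : Type*) [Field k] (h2 : (2 : k) ≠ 0)
    (R : Type*) [Ring R] [Algebra k R] [FiniteDimensional k R]
    (ε : R →ₐ[k] k) (hlocal : ∀ x : R, IsUnit x ↔ ε x ≠ 0)
    (B₀ : LinearMap.BilinForm k R) (hnd₀ : B₀.Nondegenerate)
    (hassoc₀ : ∀ r s t : R, B₀ (r * s) t = B₀ r (s * t))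
    (hsym₀ : ∀ r s : R, B₀ r s = B₀ s r) :
    (∀ B B' : LinearMap.BilinForm k R,
        B.Nondegenerate → (∀ r s t : R, B (r * s) t = B r (s * t)) →
        B'.Nondegenerate → (∀ r s t : R, B' (r * s) t = B' r (s * t)) →
        Homothetic B B') ↔
      ∀ a b : R, a * b = b * a := by
  have : IsLocalRing R := .of_isUnit_iff_map_ne_zero (ε : R →+* k) hlocal
  constructor
  · intro H
    refine IsLocalRing.mul_comm_of_isUnit_commute fun u hu ↦ ?_
    have hassoc : ∀ r s t, (B₀ ∘ₗ mulLeft k u) (r * s) t = (B₀ ∘ₗ mulLeft k u) r (s * t) :=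
      fun r s t ↦ by simp only [LinearMap.comp_apply, mulLeft_apply, ← mul_assoc, hassoc₀]
    have hhom := H B₀ _ hnd₀ hassoc₀ ((nondegenerate_comp_mulLeft_iff hnd₀).mpr hu) hassoc
    exact mul_comm_of_comp_mulLeft_apply_comm hnd₀.1 hassoc₀ hsym₀ (hhom.apply_comm hsym₀)
  · intro hcomm B B' hnd hassoc hnd' hassoc'
    let _ : CommRing R := { ‹Ring R› with mul_comm := hcomm }
    obtain ⟨u, rfl⟩ := exists_eq_comp_mulLeft hnd₀ hassoc₀ hassoc
    obtain ⟨u', rfl⟩ := exists_eq_comp_mulLeft hnd₀ hassoc₀ hassoc'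
    have hu := (nondegenerate_comp_mulLeft_iff hnd₀).mp hnd
    have hu' := (nondegenerate_comp_mulLeft_iff hnd₀).mp hnd'
    obtain ⟨c, hc, v, hv⟩ := exists_smul_mul_self_of_isUnit h2 ε hlocal (hu.unit⁻¹.isUnit.mul hu')
    have hu'_eq : u' = u * (c • ((v : R) * v)) := by
      rw [← hv, ← mul_assoc, hu.mul_val_inv, one_mul]
    rw [hu'_eq]
    exact homothetic_comp_mulLeft_mul_smul_mul_self hassoc₀ u hc v
end

section
/- Let R be a Frobenius k-algebra with form B and Nakayama automorphism σ. If σⁿ equals the inner automorphism I_a (r ↦ a r a⁻¹) for some unit a of R, then σ(a) = a. -/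
/-!
The Nakayama relation `B r s = B s (σ r)` makes `B` invariant under `σ`, hence under `σⁿ = I_a`,
which fixes `a`. Associativity turns invariance under conjugation by `a` into
`B x a = B (a x a⁻¹) a = B a x`, and the Nakayama relation rewrites `B a x` as `B x (σ a)`.
So `a - σ a` is right-orthogonal to everything, and nondegeneracy gives `σ a = a`.
-/

namespace LinearMap.BilinForm

section

variable {k R : Type*} [CommSemiring k] [AddCommMonoid R] [Module k R]
  (B : LinearMap.BilinForm k R)

theorem apply_iterate_of_nakayama {σ : R → R} (hσ : ∀ r s, B r s = B s (σ r)) (m : ℕ)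
    (r s : R) : B (σ^[m] r) (σ^[m] s) = B r s := by
  induction m generalizing r s with
  | zero => rfl
  | succ m ih =>
    rw [Function.iterate_succ_apply', Function.iterate_succ_apply', ← hσ, ← hσ, ih]

end

section

variable {k R : Type*} [CommSemiring k] [Semiring R] [Module k R] (B : LinearMap.BilinForm k R)

theorem apply_mul_mul_inv_self_of_assoc (hassoc : ∀ r s t : R, B (r * s) t = B r (s * t))
    (a : Rˣ) (x : R) : B (a * x * ↑a⁻¹) a = B a x := by
  rw [hassoc, Units.inv_mul, hassoc, mul_one]

end

end LinearMap.BilinForm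

open LinearMap.BilinForm in
theorem stmt12_general (k : Type*) [Field k] (R : Type*) [Ring R] [Algebra k R]
    (B : LinearMap.BilinForm k R) (hnd : B.Nondegenerate)
    (hassoc : ∀ r s t : R, B (r * s) t = B r (s * t))
    (σ : R ≃ₐ[k] R) (hσ : ∀ r s : R, B r s = B s (σ r))
    (n : ℕ) (a : Rˣ)
    (hn : ∀ r : R, (⇑σ)^[n] r = ↑a * r * ↑a⁻¹) :
    σ ↑a = ↑a := by
  have hfix : (⇑σ)^[n] (a : R) = a := by rw [hn, Units.mul_inv_cancel_right]
  have hright (x : R) : B x a = B x (σ a) := calc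
    B x a = B ((⇑σ)^[n] x) ((⇑σ)^[n] a) := (apply_iterate_of_nakayama B hσ n x a).symm
    _ = B (a * x * ↑a⁻¹) a := by rw [hn, hfix]
    _ = B a x := apply_mul_mul_inv_self_of_assoc B hassoc a x
    _ = B x (σ a) := hσ a x
  refine (sub_eq_zero.mp (hnd.2 _ fun x => ?_)).symm
  rw [map_sub, hright, sub_self]

/-- If the Nakayama automorphism `σ` of a nondegenerate associative form `B` satisfies
`σⁿ = I_a` (conjugation by a unit `a`), then `σ a = a`. -/
theorem stmt12 (k : Type*) [Field k] (R : Type*) [Ring R] [Algebra k R]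
    [FiniteDimensional k R]
    (B : LinearMap.BilinForm k R) (hnd : B.Nondegenerate)
    (hassoc : ∀ r s t : R, B (r * s) t = B r (s * t))
    (σ : R ≃ₐ[k] R) (hσ : ∀ r s : R, B r s = B s (σ r))
    (n : ℕ) (a : Rˣ)
    (hn : ∀ r : R, (⇑σ)^[n] r = ↑a * r * ↑a⁻¹) :
    σ ↑a = ↑a :=
  stmt12_general k R B hnd hassoc σ hσ n a hn
end

section
/- Let (R, m) be a finite-dimensional local k-algebra with R/m ≅ k, σ a k-algebra automorphism with σⁿ = I_a for some unit a, and suppose char k does not divide n. If x is a unit of R with σ(x) = x and whose image in R/m ≅ k is an n-th power in k∖{0}, then there exists a unit u ∈ R with σ(u) = u and uⁿ = x; hence N_σ(u) = x, where N_σ(u) = u σ(u) ⋯ σ^{n-1}(u). -/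
/-!
Since `σ` fixes `x`, it fixes the commutative subalgebra `k[x]`, so it suffices to find an
`n`-th root of `x` inside `k[x]`. With `ε x = βⁿ`, the element `βⁿ - x` lies in the kernel of `ε`,
which consists of nilpotents because `R` is finite-dimensional and local. As `n` is invertible,
`β` is an approximate root of `Xⁿ - x` with unit derivative `nβⁿ⁻¹`, and Newton's method lifts it
to an exact root in `k[x]`.
-/

open Polynomial
open scoped IsMulCommutative -- the `CommRing` structure on `k[x]`

/-- Writing `minpoly s = X ^ m * q` with `q 0 ≠ 0`, the factor `q(s)` is a unit since
`ε (q(s)) = q(0)`, hence `s ^ m = 0`. -/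
theorem isNilpotent_of_algHom_apply_eq_zero_s14 {k R : Type*} [Field k] [Ring R] [Algebra k R]
    (ε : R →ₐ[k] k) (hunit : ∀ y : R, ε y ≠ 0 → IsUnit y) {s : R} (hint : IsIntegral k s)
    (hs : ε s = 0) : IsNilpotent s := by
  obtain ⟨q, hq, hXq⟩ :=
    (minpoly k s).exists_eq_pow_rootMultiplicity_mul_and_not_dvd (minpoly.ne_zero hint) 0
  rw [C_0, sub_zero] at hq hXq
  have hq_unit : IsUnit (aeval s q) := by
    refine hunit _ ?_
    rw [← aeval_algHom_apply, hs, ← coeff_zero_eq_aeval_zero]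
    rwa [X_dvd_iff] at hXq
  have hroot := minpoly.aeval k s
  rw [hq, map_mul, map_pow, aeval_X, hq_unit.mul_left_eq_zero] at hroot
  exact ⟨_, hroot⟩

theorem exists_pow_eq_of_isNilpotent_pow_sub {S : Type*} [CommRing S] {n : ℕ}
    (hn : IsUnit (n : S)) {b x : S} (hb : IsUnit b) (h : IsNilpotent (b ^ n - x)) :
    ∃ r : S, r ^ n = x := by
  have hval : aeval b (X ^ n - C x) = b ^ n - x := by simp
  have hderiv : aeval b (derivative (X ^ n - C x)) = n * b ^ (n - 1) := by
    simp [derivative_X_pow]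
  have hderiv_unit : IsUnit (aeval b (derivative (X ^ n - C x))) :=
    hderiv ▸ hn.mul (hb.pow (n - 1))
  obtain ⟨r, ⟨-, hr⟩, -⟩ := existsUnique_nilpotent_sub_and_aeval_eq_zero (hval ▸ h) hderiv_unit
  exact ⟨r, by simpa [sub_eq_zero] using hr⟩

theorem List.prod_map_range_iterate_eq_pow {M : Type*} [Monoid M] {f : M → M} {u : M}
    (hu : f u = u) (n : ℕ) : ((List.range n).map fun i => f^[i] u).prod = u ^ n := by
  simp [Function.iterate_fixed hu]

theorem stmt14_general (k : Type*) [Field k]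
    (R : Type*) [Ring R] [Algebra k R] [FiniteDimensional k R]
    (ε : R →ₐ[k] k) (hlocal : ∀ y : R, IsUnit y ↔ ε y ≠ 0)
    (σ : R ≃ₐ[k] R) (n : ℕ)
    (hchar : (n : k) ≠ 0)
    (x : Rˣ) (hx : σ ↑x = ↑x) (hres : ∃ β : k, β ≠ 0 ∧ ε ↑x = β ^ n) :
    ∃ u : Rˣ, σ ↑u = ↑u ∧ (↑u : R) ^ n = ↑x ∧
      ((List.range n).map (fun i => (⇑σ)^[i] ↑u)).prod = (↑x : R) := by
  obtain ⟨β, hβ, hεx⟩ := hres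
  let S := Algebra.adjoin k ({(x : R)} : Set R)
  let xS : S := ⟨x, Algebra.self_mem_adjoin_singleton k _⟩
  have hnil : IsNilpotent (algebraMap k S β ^ n - xS) := by
    refine (IsNilpotent.map_iff (f := S.val) Subtype.val_injective).1 ?_
    refine isNilpotent_of_algHom_apply_eq_zero_s14 ε (fun y => (hlocal y).2) (.of_finite k _) ?_
    simp [xS, hεx]
  have hn_unit : IsUnit (n : S) := by simpa using hchar.isUnit.map (algebraMap k S)
  obtain ⟨r, hr⟩ := exists_pow_eq_of_isNilpotent_pow_sub hn_unit
    (hβ.isUnit.map (algebraMap k S)) hnil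
  have hrx : (r : R) ^ n = x := congrArg Subtype.val hr
  have hfix : S ≤ AlgHom.equalizer σ (AlgHom.id k R) :=
    Algebra.adjoin_le (Set.singleton_subset_iff.2 hx)
  have hσr : σ r = r := hfix r.2
  have hn : n ≠ 0 := by rintro rfl; exact hchar Nat.cast_zero
  have hr_unit : IsUnit (r : R) := (isUnit_pow_iff hn).1 (hrx ▸ x.isUnit)
  refine ⟨hr_unit.unit, hσr, hrx, ?_⟩
  exact (List.prod_map_range_iterate_eq_pow hσr n).trans hrx

/-- Let `(R, m)` be a finite-dimensional local `k`-algebra with `R/m ≅ k` (encoded via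
`ε : R →ₐ[k] k` with units exactly the elements outside `m = ker ε`), let `σ` be a
`k`-algebra automorphism with `σⁿ = I_a` for a unit `a`, and suppose `char k ∤ n`
(i.e. `(n : k) ≠ 0`).  If `x` is a unit fixed by `σ` whose residue is an `n`-th power
in `k∖{0}`, then there is a unit `u` fixed by `σ` with `uⁿ = x`; hence `N_σ(u) = x`. -/
theorem stmt14 (k : Type*) [Field k]
    (R : Type*) [Ring R] [Algebra k R] [FiniteDimensional k R]
    (ε : R →ₐ[k] k) (hlocal : ∀ y : R, IsUnit y ↔ ε y ≠ 0)
    (σ : R ≃ₐ[k] R) (n : ℕ) (a : Rˣ)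
    (hn : ∀ r : R, (⇑σ)^[n] r = ↑a * r * ↑a⁻¹)
    (hchar : (n : k) ≠ 0)
    (x : Rˣ) (hx : σ ↑x = ↑x) (hres : ∃ β : k, β ≠ 0 ∧ ε ↑x = β ^ n) :
    ∃ u : Rˣ, σ ↑u = ↑u ∧ (↑u : R) ^ n = ↑x ∧
      ((List.range n).map (fun i => (⇑σ)^[i] ↑u)).prod = (↑x : R) :=
  stmt14_general k R ε hlocal σ n hchar x hx hres
end

section
/- Let (R, m) be a local Frobenius k-algebra with R/m ≅ k, with form B whose Nakayama automorphism σ satisfies σⁿ = I_a for a unit a, and suppose char k does not divide n. Then there exists a unit u of R such that the form B'(r,s) := B(r,su) has Nakayama automorphism σ' with (σ')ⁿ = Id. -/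
/-!
Write `σⁿ = I_a`. Since `σ` commutes with `σⁿ`, `I_{σ(a)} = I_a`, so `ζ = a⁻¹ σ(a)` is a central
unit, and telescoping `σⁿ(a) = a` shows that its partial norm `ζ σ(ζ) ⋯ σⁿ⁻¹(ζ)` is `1`. As `ζ ≡ 1`
modulo the maximal ideal and `n` is invertible, the usual Hilbert 90 element of the commutative
algebra `Z(R)`, corrected by an `n`-th root, gives a central `c` with `σ(c) ζ = c`; then `b = a c`
is `σ`-fixed and `I_b = I_a`. Finally let `u` be the `n`-th root of `ε(b) b⁻¹ ≡ 1` that is a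
polynomial in `b⁻¹`: it is `σ`-fixed, so `(I_u ∘ σ)ⁿ = I_{uⁿ} ∘ I_b = I_{ε(b)} = id`.
-/

open Polynomial Finset

theorem existsUnique_pow_eq_of_isNilpotent_sub_one {S : Type*} [CommRing S] {n : ℕ}
    (hn : IsUnit (n : S)) {c : S} (hc : IsNilpotent (c - 1)) :
    ∃! r : S, IsNilpotent (r - 1) ∧ r ^ n = c := by
  have hP : IsNilpotent (aeval (1 : S) (X ^ n - C c)) := by
    rw [← isNilpotent_neg_iff]
    simpa using hc
  have hP' : IsUnit (aeval (1 : S) (derivative (X ^ n - C c))) := by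
    simpa [derivative_X_pow] using hn
  refine (existsUnique_congr fun r => ?_).1 (existsUnique_nilpotent_sub_and_aeval_eq_zero hP hP')
  rw [← isNilpotent_neg_iff, neg_sub, map_sub, map_pow, aeval_X, aeval_C,
    Algebra.algebraMap_self, RingHom.id_apply, sub_eq_zero]

open scoped IsMulCommutative in
theorem exists_pow_eq_mem_adjoin {k A : Type*} [CommRing k] [Ring A] [Algebra k A] {n : ℕ}
    (hn : IsUnit (n : k)) {y : A} (hy : IsNilpotent (y - 1)) :
    ∃ r ∈ Algebra.adjoin k {y}, r ^ n = y := by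
  have hnS : IsUnit (n : Algebra.adjoin k {y}) := by simpa using hn.map (algebraMap k _)
  obtain ⟨r, ⟨-, hr⟩, -⟩ := existsUnique_pow_eq_of_isNilpotent_sub_one hnS
    (c := ⟨y, Algebra.self_mem_adjoin_singleton k y⟩)
    (by obtain ⟨e, he⟩ := hy; exact ⟨e, Subtype.ext (by simpa using he)⟩)
  exact ⟨r, r.2, by simpa using congrArg Subtype.val hr⟩

section HilbertNinety

variable {S F : Type*} [CommRing S] [FunLike F S S] [RingHomClass F S S]

theorem IsNilpotent.mul_sub_one {x y : S} (hx : IsNilpotent (x - 1)) (hy : IsNilpotent (y - 1)) :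
    IsNilpotent (x * y - 1) := by
  rw [show x * y - 1 = (x - 1) * y + (y - 1) by ring]
  exact (Commute.all _ _).isNilpotent_add ((Commute.all _ _).isNilpotent_mul_right hx) hy

theorem isNilpotent_prod_sub_one {ι : Type*} {s : Finset ι} {f : ι → S}
    (h : ∀ i ∈ s, IsNilpotent (f i - 1)) : IsNilpotent (∏ i ∈ s, f i - 1) :=
  prod_induction f (fun x => IsNilpotent (x - 1)) (fun _ _ => IsNilpotent.mul_sub_one)
    (by simp) h

def partialNorm (τ : S → S) (ζ : S) (i : ℕ) : S := ∏ j ∈ range i, τ^[j] ζ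

@[simp] theorem partialNorm_zero (τ : S → S) (ζ : S) : partialNorm τ ζ 0 = 1 := by
  simp [partialNorm]

theorem partialNorm_succ (τ : F) (ζ : S) (i : ℕ) :
    partialNorm τ ζ (i + 1) = ζ * τ (partialNorm τ ζ i) := by
  simp only [partialNorm, prod_range_succ', map_prod, Function.iterate_succ_apply',
    Function.iterate_zero_apply]
  ring

theorem isNilpotent_partialNorm_sub_one (τ : F) {ζ : S} (hζ : IsNilpotent (ζ - 1)) (i : ℕ) :
    IsNilpotent (partialNorm τ ζ i - 1) :=
  isNilpotent_prod_sub_one fun j _ => by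
    simpa [RingHom.coe_pow] using hζ.map ((τ : S →+* S) ^ j)

theorem map_prod_partialNorm_mul_pow {n : ℕ} (τ : F) {ζ : S} (hnorm : partialNorm τ ζ n = 1) :
    τ (∏ i ∈ range n, partialNorm τ ζ i) * ζ ^ n = ∏ i ∈ range n, partialNorm τ ζ i := by
  calc τ (∏ i ∈ range n, partialNorm τ ζ i) * ζ ^ n
      = ∏ i ∈ range n, partialNorm τ ζ (i + 1) := by
        rw [map_prod, pow_eq_prod_const, ← prod_mul_distrib]
        exact prod_congr rfl fun i _ => by rw [partialNorm_succ, mul_comm]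
    _ = ∏ i ∈ range n, partialNorm τ ζ i := by
        have h := (prod_range_succ' (partialNorm τ ζ) n).symm.trans (prod_range_succ _ n)
        rwa [partialNorm_zero, hnorm, mul_one, mul_one] at h

/-- The witness is the `n`-th root `c ≡ 1` of `c₀ = ∏_{i<n} N_i(ζ)`; uniqueness of such roots
turns `τ(c₀) ζⁿ = c₀` into `τ(c) ζ = c`. -/
theorem exists_isUnit_map_mul_eq_self {n : ℕ} (hn : IsUnit (n : S)) (τ : F)
    {ζ : S} (hζ : IsNilpotent (ζ - 1)) (hnorm : partialNorm τ ζ n = 1) :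
    ∃ c : S, IsUnit c ∧ τ c * ζ = c := by
  obtain ⟨c, ⟨hc1, hcn⟩, huniq⟩ := existsUnique_pow_eq_of_isNilpotent_sub_one hn
    (isNilpotent_prod_sub_one fun i _ => isNilpotent_partialNorm_sub_one τ hζ i)
  have hτc : IsNilpotent (τ c - 1) := by simpa using hc1.map τ
  refine ⟨c, by simpa using hc1.isUnit_one_add, huniq _ ⟨hτc.mul_sub_one hζ, ?_⟩⟩
  rw [mul_pow, ← map_pow, hcn, map_prod_partialNorm_mul_pow τ hnorm]

end HilbertNinety

section Conjugation

variable {M : Type*} [Monoid M]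

theorem Units.conj_mul (v w : Mˣ) (r : M) :
    ↑(v * w) * r * ↑(v * w)⁻¹ = ↑v * (↑w * r * ↑w⁻¹) * ↑v⁻¹ := by
  simp [mul_assoc]

theorem Units.conj_eq_self_of_mem_center {w : Mˣ} (hw : ↑w ∈ Set.center M) (r : M) :
    ↑w * r * ↑w⁻¹ = r := by
  rw [← Semigroup.mem_center_iff.1 hw r, mul_assoc, Units.mul_inv, mul_one]

theorem Units.inv_mul_mem_center_of_conj_eq {v w : Mˣ}
    (h : ∀ s : M, ↑v * s * ↑v⁻¹ = ↑w * s * ↑w⁻¹) : (↑w⁻¹ * ↑v : M) ∈ Set.center M := by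
  refine Semigroup.mem_center_iff.2 fun s => ?_
  calc s * (↑w⁻¹ * ↑v) = ↑w⁻¹ * (↑w * s * ↑w⁻¹) * ↑v := by simp [mul_assoc]
    _ = ↑w⁻¹ * ↑v * s := by rw [← h]; simp [mul_assoc]

variable {F : Type*} [FunLike F M M] [MonoidHomClass F M M]

theorem Units.map_inv_of_map_eq {σ : F} {u : Mˣ} (hu : σ u = u) : σ ↑u⁻¹ = ↑u⁻¹ := by
  have h := Units.coe_map_inv (σ : M →* M) u
  rwa [show Units.map (σ : M →* M) u = u from Units.ext hu, eq_comm] at h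

theorem iterate_conj_comp_apply (σ : F) {u : Mˣ} (hu : σ u = u) (i : ℕ) (r : M) :
    (fun x => ↑u * σ x * ↑u⁻¹)^[i] r = ↑(u ^ i) * σ^[i] r * ↑(u ^ i)⁻¹ := by
  induction i with
  | zero => simp
  | succ i ih =>
    rw [Function.iterate_succ_apply', ih, Function.iterate_succ_apply']
    simp [hu, Units.map_inv_of_map_eq hu, pow_succ', mul_assoc]

end Conjugation

section NakayamaAutomorphism

variable {k R : Type*} [Field k] [Ring R] [Algebra k R]

theorem inv_mul_map_mem_center_of_iterate_eq_conj {F : Type*} [EquivLike F R R]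
    [MulEquivClass F R R] (σ : F) {n : ℕ} {a : Rˣ} (hσa : ∀ r : R, σ^[n] r = ↑a * r * ↑a⁻¹) :
    (↑a⁻¹ * σ a : R) ∈ Set.center R := by
  refine Units.inv_mul_mem_center_of_conj_eq (v := Units.map (σ : R →* R) a) fun r => ?_
  have h := Function.Commute.self_iterate σ n (EquivLike.inv σ r)
  simpa only [Units.coe_map, Units.coe_map_inv, MonoidHom.coe_coe, Function.comp_apply, hσa,
    map_mul, EquivLike.apply_inv_apply] using h

theorem iterate_apply_eq_mul_partialNorm {F G : Type*} [FunLike G R R] [MonoidHomClass G R R]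
    [FunLike F (Subalgebra.center k R) (Subalgebra.center k R)]
    [RingHomClass F (Subalgebra.center k R) (Subalgebra.center k R)]
    (σ : G) (τ : F) (hτ : ∀ z, (τ z : R) = σ z) {a : R} {ζ : Subalgebra.center k R}
    (h : σ a = a * ζ) (i : ℕ) : σ^[i] a = a * partialNorm τ ζ i := by
  induction i with
  | zero => simp
  | succ i ih =>
    rw [Function.iterate_succ_apply', ih, map_mul, h, partialNorm_succ, Subalgebra.coe_mul, hτ,
      mul_assoc]

variable [FiniteDimensional k R] {ε : R →ₐ[k] k} (hunit : ∀ y : R, ε y ≠ 0 → IsUnit y)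
include hunit

theorem isNilpotent_of_map_eq_zero {x : R} (hx : ε x = 0) : IsNilpotent x := by
  have hp0 : minpoly k x ≠ 0 := minpoly.ne_zero (Algebra.IsIntegral.isIntegral x)
  obtain ⟨q, hq, hXq⟩ := (minpoly k x).exists_eq_pow_rootMultiplicity_mul_and_not_dvd hp0 0
  rw [map_zero, sub_zero] at hq hXq
  have hq_unit : IsUnit (aeval x q) := by
    refine hunit _ ?_
    rwa [← aeval_algHom_apply, hx, ← coeff_zero_eq_aeval_zero, ne_eq, ← X_dvd_iff]
  have h := minpoly.aeval k x
  rw [hq, map_mul, map_pow, aeval_X] at h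
  exact ⟨_, hq_unit.mul_left_eq_zero.1 h⟩

theorem isNilpotent_sub_one_of_map_eq_one {x : R} (hx : ε x = 1) : IsNilpotent (x - 1) :=
  isNilpotent_of_map_eq_zero hunit (by rw [map_sub, hx, map_one, sub_self])

theorem algHom_eq_of_forall_isUnit (φ : R →ₐ[k] k) : φ = ε := by
  ext x
  have h := (isNilpotent_of_map_eq_zero hunit (x := x - algebraMap k R (ε x)) (by simp)).map φ
  rw [map_sub, AlgHom.commutes, Algebra.algebraMap_self, RingHom.id_apply] at h
  exact sub_eq_zero.1 h.eq_zero

theorem exists_fixed_unit_conj_eq (σ : R ≃ₐ[k] R) {n : ℕ} (hn : IsUnit (n : k)) (a : Rˣ)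
    (hσa : ∀ r : R, σ^[n] r = ↑a * r * ↑a⁻¹) :
    ∃ b : Rˣ, σ b = b ∧ ∀ r : R, ↑b * r * ↑b⁻¹ = ↑a * r * ↑a⁻¹ := by
  set Z := Subalgebra.center k R
  let τ : Z ≃+* Z := Subring.centerCongr σ.toRingEquiv
  set ζ : Z := ⟨_, inv_mul_map_mem_center_of_iterate_eq_conj σ hσa⟩
  have hσa_eq : σ a = a * ζ := by simp [ζ]
  have hnorm : partialNorm τ ζ n = 1 := by
    have h := iterate_apply_eq_mul_partialNorm σ τ (fun _ => rfl) hσa_eq n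
    rw [hσa, Units.mul_inv_cancel_right] at h
    exact Subtype.ext <| a.isUnit.mul_left_cancel <| by rw [OneMemClass.coe_one, mul_one, ← h]
  have hζ : IsNilpotent (ζ - 1) := by
    have hεσ : ε (σ a) = ε a :=
      congr($(algHom_eq_of_forall_isUnit hunit (ε.comp σ.toAlgHom)) ↑a)
    obtain ⟨e, he⟩ := isNilpotent_sub_one_of_map_eq_one hunit (x := ζ) (by
      rw [map_mul, hεσ, ← map_mul, Units.inv_mul, map_one])
    exact ⟨e, Subtype.ext (by simpa using he)⟩
  obtain ⟨c, hc, hcζ⟩ := exists_isUnit_map_mul_eq_self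
    (by simpa using hn.map (algebraMap k Z)) τ hζ hnorm
  set cR := (hc.map Z.val).unit
  have hcR : (cR : R) = c := IsUnit.unit_spec _
  refine ⟨a * cR, ?_, fun r => ?_⟩
  · rw [Units.val_mul, hcR, map_mul, hσa_eq, mul_assoc]
    change ↑a * ((ζ : R) * (τ c : R)) = ↑a * c
    rw [← Subalgebra.coe_mul, mul_comm ζ, hcζ]
  · rw [Units.conj_mul, Units.conj_eq_self_of_mem_center (w := cR) (by rw [hcR]; exact c.2)]

theorem exists_fixed_unit_pow_mul_mem_center (σ : R ≃ₐ[k] R) {n : ℕ} (hn : IsUnit (n : k))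
    {b : Rˣ} (hb : σ b = b) : ∃ u : Rˣ, σ u = u ∧ (↑(u ^ n * b) : R) ∈ Set.center R := by
  have hn0 : n ≠ 0 := by rintro rfl; simp at hn
  set y : R := ε b • ↑b⁻¹
  have hy : ε y = 1 := by
    rw [map_smul, smul_eq_mul, ← map_mul, Units.mul_inv, map_one]
  have hσy : σ y = y := by rw [map_smul, Units.map_inv_of_map_eq hb]
  obtain ⟨u, hu, hun⟩ := exists_pow_eq_mem_adjoin hn (isNilpotent_sub_one_of_map_eq_one hunit hy)
  have hσu : σ u = u :=
    Algebra.adjoin_le (S := AlgHom.equalizer σ.toAlgHom (AlgHom.id k R))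
      (Set.singleton_subset_iff.2 hσy) hu
  have hu_unit : IsUnit u :=
    (isUnit_pow_iff hn0).1 (hun ▸ hunit y (by rw [hy]; exact one_ne_zero))
  refine ⟨hu_unit.unit, hσu, ?_⟩
  rw [Units.val_mul, Units.val_pow_eq_pow_val, IsUnit.unit_spec, hun, smul_mul_assoc,
    Units.inv_mul, Algebra.smul_def, mul_one]
  exact Set.algebraMap_mem_center _

end NakayamaAutomorphism

theorem stmt15_general (k : Type*) [Field k]
    (R : Type*) [Ring R] [Algebra k R] [FiniteDimensional k R]
    (ε : R →ₐ[k] k) (hlocal : ∀ y : R, IsUnit y ↔ ε y ≠ 0)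
    (B : LinearMap.BilinForm k R)
    (hassoc : ∀ r s t : R, B (r * s) t = B r (s * t))
    (σ : R ≃ₐ[k] R) (hσ : ∀ r s : R, B r s = B s (σ r))
    (n : ℕ) (a : Rˣ)
    (hn : ∀ r : R, (⇑σ)^[n] r = ↑a * r * ↑a⁻¹)
    (hchar : (n : k) ≠ 0) :
    ∃ u : Rˣ,
      (∀ r s : R, B r (s * ↑u) = B s ((↑u * σ r * ↑u⁻¹) * ↑u)) ∧
      (∀ r : R, (fun x => ↑u * σ x * ↑u⁻¹)^[n] r = r) := by
  have hunit : ∀ y : R, ε y ≠ 0 → IsUnit y := fun y => (hlocal y).2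
  obtain ⟨b, hσb, hba⟩ := exists_fixed_unit_conj_eq hunit σ hchar.isUnit a hn
  obtain ⟨u, hσu, hcenter⟩ := exists_fixed_unit_pow_mul_mem_center hunit σ hchar.isUnit hσb
  refine ⟨u, fun r s => ?_, fun r => ?_⟩
  · rw [Units.inv_mul_cancel_right, hσ, hassoc]
  · rw [iterate_conj_comp_apply σ hσu, hn, ← hba, ← Units.conj_mul,
      Units.conj_eq_self_of_mem_center hcenter]

/-- Let `(R, m)` be a local Frobenius `k`-algebra with `R/m ≅ k` (encoded via
`ε : R →ₐ[k] k` with units exactly the elements outside `m = ker ε`), with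
nondegenerate associative form `B` whose Nakayama automorphism `σ` satisfies
`σⁿ = I_a` for a unit `a`, and suppose `char k ∤ n`.  Then there is a unit `u` such
that the form `B' r s := B r (s * u)` has Nakayama automorphism `σ' = I_u ∘ σ`
satisfying `(σ')ⁿ = Id`. -/
theorem stmt15 (k : Type*) [Field k]
    (R : Type*) [Ring R] [Algebra k R] [FiniteDimensional k R]
    (ε : R →ₐ[k] k) (hlocal : ∀ y : R, IsUnit y ↔ ε y ≠ 0)
    (B : LinearMap.BilinForm k R) (hnd : B.Nondegenerate)
    (hassoc : ∀ r s t : R, B (r * s) t = B r (s * t))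
    (σ : R ≃ₐ[k] R) (hσ : ∀ r s : R, B r s = B s (σ r))
    (n : ℕ) (a : Rˣ)
    (hn : ∀ r : R, (⇑σ)^[n] r = ↑a * r * ↑a⁻¹)
    (hchar : (n : k) ≠ 0) :
    ∃ u : Rˣ,
      (∀ r s : R, B r (s * ↑u) = B s ((↑u * σ r * ↑u⁻¹) * ↑u)) ∧
      (∀ r : R, (fun x => ↑u * σ x * ↑u⁻¹)^[n] r = r) :=
  stmt15_general k R ε hlocal B hassoc σ hσ n a hn hchar
end

section
/- Let R be a Frobenius k-algebra with an ideal m such that R/m ≅ k, with form B whose Nakayama automorphism σ satisfies σⁿ = Id. Let B'(r,s) = B(r,su) for a unit u, and define N_σ(u) = u σ(u) ⋯ σ^{n-1}(u). If B and B' are homothetic, then N_σ(u) is central in R. -/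
theorem mul_eq_mul_nakayama_of_homothety {k R : Type*} [CommRing k] [Ring R] [Module k R]
    {B : LinearMap.BilinForm k R} (hB : B.SeparatingRight)
    (hassoc : ∀ r s t : R, B (r * s) t = B r (s * t))
    {σ : R → R} (hσ : ∀ r s : R, B r s = B s (σ r))
    {u : R} {α : k} {V : R → R} (hV : ∀ r s : R, B r (s * u) = α * B (V r) (V s))
    {r x : R} (hx : V x = σ (V r)) : x * u = u * σ r := by
  refine sub_eq_zero.mp (hB _ fun t => ?_)
  rw [map_sub, sub_eq_zero]
  calc B t (x * u) = α * B (V t) (σ (V r)) := by rw [hV, hx]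
    _ = B (t * u) (σ r) := by rw [← hσ, ← hV, hσ]
    _ = B t (u * σ r) := hassoc t u (σ r)

/-- The paper's `N_σ(u) = u σ(u) ⋯ σⁿ⁻¹(u)`, for an arbitrary map `f` in place of `σ`. -/
def twistedNorm {M : Type*} [Monoid M] (f : M → M) (u : M) (n : ℕ) : M :=
  ((List.range n).map fun i => f^[i] u).prod

section TwistedNorm

variable {M F : Type*} [Monoid M] [FunLike F M M] [MonoidHomClass F M M] (σ : F)

theorem twistedNorm_succ (u : M) (n : ℕ) :
    twistedNorm σ u (n + 1) = u * σ (twistedNorm σ u n) := by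
  simp only [twistedNorm, List.prod_range_succ', Function.iterate_zero_apply, map_list_prod,
    List.map_map]
  exact congrArg (u * ·) (congrArg List.prod
    (List.map_congr_left fun i _ => Function.iterate_succ_apply' _ i u))

variable {σ} {τ : M → M} {u : M}

theorem iterate_mul_twistedNorm (hτ : ∀ x, τ x * u = u * σ x) (m : ℕ) (x : M) :
    τ^[m] x * twistedNorm σ u m = twistedNorm σ u m * σ^[m] x := by
  induction m generalizing x with
  | zero => simp [twistedNorm]
  | succ m ih =>
    rw [twistedNorm_succ, Function.iterate_succ_apply', Function.iterate_succ_apply', ← mul_assoc,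
      hτ, mul_assoc, ← map_mul, ih, map_mul, mul_assoc]

theorem twistedNorm_mem_center (hτ : ∀ x, τ x * u = u * σ x) {n : ℕ}
    (hσn : ∀ x, σ^[n] x = x) (hτn : ∀ x, τ^[n] x = x) : twistedNorm σ u n ∈ Set.center M :=
  Semigroup.mem_center_iff.mpr fun x => by
    simpa only [hσn, hτn] using iterate_mul_twistedNorm hτ n x

end TwistedNorm

theorem stmt16_general (k : Type*) [Field k]
    (R : Type*) [Ring R] [Algebra k R]
    (B : LinearMap.BilinForm k R) (hnd : B.Nondegenerate)
    (hassoc : ∀ r s t : R, B (r * s) t = B r (s * t))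
    (σ : R ≃ₐ[k] R) (hσ : ∀ r s : R, B r s = B s (σ r))
    (n : ℕ) (hn : ∀ r : R, (⇑σ)^[n] r = r)
    (u : Rˣ)
    (B' : LinearMap.BilinForm k R) (hB' : ∀ r s : R, B' r s = B r (s * u))
    (hhom : Homothetic B B') :
    ((List.range n).map (fun i => (⇑σ)^[i] ↑u)).prod ∈ Set.center R := by
  obtain ⟨α, -, V, hV⟩ := hhom
  let τ : R → R := V.symm ∘ σ ∘ V
  have hτ : ∀ x, τ x * u = u * σ x := fun x =>
    mul_eq_mul_nakayama_of_homothety hnd.2 hassoc hσ (fun r s => (hB' r s).symm.trans (hV r s))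
      (V.apply_symm_apply _)
  have hVτ : Function.Semiconj V τ σ := fun x => V.apply_symm_apply _
  have hτn : ∀ x, τ^[n] x = x := fun x =>
    V.injective ((hVτ.iterate_right n x).trans (hn (V x)))
  exact twistedNorm_mem_center hτ hn hτn

/-- Let `R` be a Frobenius `k`-algebra with an ideal `m` such that `R/m ≅ k` (encoded
via an algebra map `ε : R →ₐ[k] k`, whose kernel is `m`), with nondegenerate associative
form `B` whose Nakayama automorphism `σ` satisfies `σⁿ = Id`.  If `B' r s = B r (s * u)`
for a unit `u` and `B`, `B'` are homothetic, then `N_σ(u) = u σ(u) ⋯ σ^{n-1}(u)` is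
central in `R`. -/
theorem stmt16 (k : Type*) [Field k]
    (R : Type*) [Ring R] [Algebra k R] [FiniteDimensional k R]
    (ε : R →ₐ[k] k)
    (B : LinearMap.BilinForm k R) (hnd : B.Nondegenerate)
    (hassoc : ∀ r s t : R, B (r * s) t = B r (s * t))
    (σ : R ≃ₐ[k] R) (hσ : ∀ r s : R, B r s = B s (σ r))
    (n : ℕ) (hn : ∀ r : R, (⇑σ)^[n] r = r)
    (u : Rˣ)
    (B' : LinearMap.BilinForm k R) (hB' : ∀ r s : R, B' r s = B r (s * u))
    (hhom : Homothetic B B') :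
    ((List.range n).map (fun i => (⇑σ)^[i] ↑u)).prod ∈ Set.center R :=
  stmt16_general k R B hnd hassoc σ hσ n hn u B' hB' hhom
end

section
/- Let R = ℂ⟨x,y⟩/(x² = 0, y² = 0, xyx = yxy), a six-dimensional ℂ-algebra with basis {1, x, y, xy, yx, xyx}, with Frobenius form B(r,s) = λ(rs) where λ picks the coefficient of xyx. The Nakayama automorphism σ swaps x and y, so σ² = Id. For ε ≠ 0 and u = 1 + εx, the norm N_σ(u) = u σ(u) = 1 + εx + εy + ε²xy is not central in R (it fails to commute with x). -/
/-!
Write `N = (1 + εx)(1 + εy)`. Because `x² = 0`, the commutator `xN - Nx` equals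
`ε(xy - yx) - ε²xyx`; as `xy`, `yx`, `xyx` are distinct basis vectors, its `yx`-coordinate
is `-ε ≠ 0`, so `N` does not commute with `x` and in particular is not central.
-/

section NakayamaNorm

variable {K A : Type*} [CommRing K] [Ring A] [Algebra K A]

theorem one_add_smul_mul_one_add_smul (ε : K) (x y : A) :
    (1 + ε • x) * (1 + ε • y) = 1 + ε • x + ε • y + ε ^ 2 • (x * y) := by
  simp only [mul_add, add_mul, one_mul, mul_one, smul_mul_smul_comm, ← pow_two]
  abel

theorem mul_one_add_smul_mul_sub_of_sq_eq_zero {x : A} (hx : x ^ 2 = 0) (ε : K) (y : A) :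
    x * ((1 + ε • x) * (1 + ε • y)) - (1 + ε • x) * (1 + ε • y) * x
      = ε • (x * y - y * x) - ε ^ 2 • (x * y * x) := by
  rw [pow_two] at hx
  simp only [mul_add, add_mul, one_mul, mul_one, mul_smul_comm, smul_mul_assoc,
    ← mul_assoc, hx, smul_zero, zero_mul, pow_two]
  module

theorem not_commute_one_add_smul_mul_of_basis {ι : Type*} (b : Module.Basis ι K A)
    {i j k : ι} (hji : j ≠ i) (hjk : j ≠ k) {x y : A} (hx : x ^ 2 = 0)
    (hi : b i = x * y) (hj : b j = y * x) (hk : b k = x * y * x) {ε : K} (hε : ε ≠ 0) :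
    ¬ Commute ((1 + ε • x) * (1 + ε • y)) x := by
  intro h
  have hzero : ε • (b i - b j) - ε ^ 2 • b k = 0 := by
    rw [hi, hj, hk, ← mul_one_add_smul_mul_sub_of_sq_eq_zero hx, h.eq, sub_self]
  have hcoord := congrArg (fun v => b.repr v j) hzero
  exact hε (by simpa [hji.symm, hjk.symm] using hcoord)

end NakayamaNorm

theorem stmt17_general (R : Type*) [Ring R] [Algebra ℂ R]
    (x y : R) (hx2 : x ^ 2 = 0)
    (b : Module.Basis (Fin 6) ℂ R)
    (hb3 : b 3 = x * y) (hb4 : b 4 = y * x) (hb5 : b 5 = x * y * x)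
    (ε : ℂ) (hε : ε ≠ 0) :
    (1 + ε • x) * (1 + ε • y) = 1 + ε • x + ε • y + (ε ^ 2) • (x * y) ∧
    ¬ Commute ((1 + ε • x) * (1 + ε • y)) x ∧
    (1 + ε • x) * (1 + ε • y) ∉ Set.center R := by
  have hnc : ¬ Commute ((1 + ε • x) * (1 + ε • y)) x :=
    not_commute_one_add_smul_mul_of_basis b (by decide) (by decide) hx2 hb3 hb4 hb5 hε
  exact ⟨one_add_smul_mul_one_add_smul ε x y, hnc,
    fun hc => hnc ((Set.mem_center_iff.mp hc).comm x)⟩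

/-- The extended Nakayama–Nesbitt algebra `R = ℂ⟨x,y⟩/(x² = y² = 0, xyx = yxy)`,
a six-dimensional `ℂ`-algebra with basis `{1, x, y, xy, yx, xyx}`.  For `ε ≠ 0` and
`u = 1 + εx`, the norm `N_σ(u) = u σ(u) = (1 + εx)(1 + εy) = 1 + εx + εy + ε²xy`
(the Nakayama automorphism `σ` swaps `x` and `y`) is not central in `R`: it fails
to commute with `x`. -/
theorem stmt17 (R : Type*) [Ring R] [Algebra ℂ R]
    (x y : R) (hx2 : x ^ 2 = 0) (hy2 : y ^ 2 = 0) (hxyx : x * y * x = y * x * y)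
    (b : Module.Basis (Fin 6) ℂ R)
    (hb0 : b 0 = 1) (hb1 : b 1 = x) (hb2 : b 2 = y)
    (hb3 : b 3 = x * y) (hb4 : b 4 = y * x) (hb5 : b 5 = x * y * x)
    (ε : ℂ) (hε : ε ≠ 0) :
    (1 + ε • x) * (1 + ε • y) = 1 + ε • x + ε • y + (ε ^ 2) • (x * y) ∧
    ¬ Commute ((1 + ε • x) * (1 + ε • y)) x ∧
    (1 + ε • x) * (1 + ε • y) ∉ Set.center R :=
  stmt17_general R x y hx2 b hb3 hb4 hb5 ε hε
end

section
/- Let k be a field and (R, m) an even-dimensional local Frobenius k-algebra with R/m ≅ k. Then the determinant of a nondegenerate associative bilinear form B on R (computed via the matrix of B in any k-basis), taken as an element of the square class group k∖{0} modulo squares, is independent of the choice of the form B and of the basis. -/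
/-!
Any two nondegenerate associative forms on a Frobenius algebra differ by a unit:
`B' (r, s) = B (u r, s)`, so their Gram matrices in a fixed basis differ by the factor
`det (r ↦ u r)`. Since `R` is local with residue field `k`, `u - ε u` is nilpotent and this
determinant is `(ε u) ^ dim R`, a square because `dim R` is even. A change of basis by `V`
multiplies the Gram determinant by the square `(det V) ^ 2`.
-/

open Module Polynomial

lemma LinearMap.det_algebraMap_sub_of_isNilpotent {K M : Type*} [CommRing K] [IsDomain K]
    [AddCommGroup M] [Module K M] [Module.Finite K M] [Module.Free K M] {N : Module.End K M}
    (hN : IsNilpotent N) (c : K) : (algebraMap K (Module.End K M) c - N).det = c ^ finrank K M := by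
  rw [← eval_charpoly, hN.charpoly_eq_X_pow_finrank, eval_pow, eval_X]

section LocalAlgebra

variable {k R : Type*} [Field k] [Ring R] [Algebra k R] [FiniteDimensional k R]

/-- If `minpoly k w = X ^ m * q` with `q 0 ≠ 0`, then `q w` is a unit and `w ^ m * q w = 0`. -/
lemma isNilpotent_of_map_eq_zero_s19 (ε : R →ₐ[k] k) (hunit : ∀ y : R, ε y ≠ 0 → IsUnit y) {w : R}
    (hw : ε w = 0) : IsNilpotent w := by
  have hp : minpoly k w ≠ 0 := minpoly.ne_zero (IsIntegral.of_finite k w)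
  set m := (minpoly k w).rootMultiplicity 0
  set q := minpoly k w /ₘ (X - C 0) ^ m
  have hfactor : w ^ m * aeval w q = 0 := by
    have h := congrArg (aeval w) ((minpoly k w).pow_mul_divByMonic_rootMultiplicity_eq 0)
    rwa [map_mul, map_pow, map_sub, aeval_X, aeval_C, map_zero, sub_zero, minpoly.aeval] at h
  have hq : IsUnit (aeval w q) := hunit _ <| by
    rw [← aeval_algHom_apply, hw, coe_aeval_eq_eval]
    exact eval_divByMonic_pow_rootMultiplicity_ne_zero 0 hp
  exact ⟨m, hq.mul_left_eq_zero.mp hfactor⟩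

lemma det_lmul_eq_pow (ε : R →ₐ[k] k) (hunit : ∀ y : R, ε y ≠ 0 → IsUnit y) (u : R) :
    (Algebra.lmul k R u).det = ε u ^ finrank k R := by
  set w := algebraMap k R (ε u) - u
  have hw : IsNilpotent w := isNilpotent_of_map_eq_zero_s19 ε hunit (by simp [w])
  have hlmul : Algebra.lmul k R u = algebraMap k _ (ε u) - Algebra.lmul k R w := by
    simp only [w, map_sub, AlgHom.commutes, sub_sub_cancel]
  rw [hlmul, LinearMap.det_algebraMap_sub_of_isNilpotent (hw.map _)]

end LocalAlgebra

namespace LinearMap.BilinForm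

variable {A M : Type*} [CommRing A] [AddCommGroup M] [Module A M]

lemma det_toMatrix_compLeft {ι : Type*} [Fintype ι] [DecidableEq ι] (b : Basis ι A M)
    (B : LinearMap.BilinForm A M) (f : Module.End A M) :
    (toMatrix b (B.compLeft f)).det = f.det * (toMatrix b B).det := by
  rw [toMatrix_compLeft, Matrix.det_mul, Matrix.det_transpose, det_toMatrix]

lemma toMatrix_reindex {ι ι' : Type*} [Fintype ι] [DecidableEq ι] [Fintype ι'] [DecidableEq ι']
    (b : Basis ι A M) (e : ι ≃ ι') (B : LinearMap.BilinForm A M) :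
    toMatrix (b.reindex e) B = (toMatrix b B).submatrix e.symm e.symm := by
  ext i j
  simp [toMatrix_apply]

lemma exists_det_toMatrix_eq_sq_mul [Nontrivial A] {ι ι' : Type*} [Fintype ι] [DecidableEq ι]
    [Fintype ι'] [DecidableEq ι'] (b : Basis ι A M) (b' : Basis ι' A M)
    (B : LinearMap.BilinForm A M) :
    ∃ c : A, IsUnit c ∧ (toMatrix b' B).det = c ^ 2 * (toMatrix b B).det := by
  set b'' := b'.reindex (b'.indexEquiv b)
  have hdet : (toMatrix b'' B).det = (toMatrix b' B).det := by
    rw [toMatrix_reindex, Matrix.det_submatrix_equiv_self]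
  have := b.invertibleToMatrix b''
  refine ⟨(b.toMatrix b'').det, Matrix.isUnit_det_of_invertible _, ?_⟩
  rw [← hdet, ← toMatrix_mul_basis_toMatrix b b'', Matrix.det_mul, Matrix.det_mul,
    Matrix.det_transpose]
  ring

section Frobenius

variable {k R : Type*} [Field k] [Ring R] [Algebra k R] [FiniteDimensional k R]

lemma exists_eq_compLeft_lmul {B B' : LinearMap.BilinForm k R}
    (hB : B.Nondegenerate) (hassoc : ∀ r s t : R, B (r * s) t = B r (s * t))
    (hassoc' : ∀ r s t : R, B' (r * s) t = B' r (s * t)) :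
    ∃ u : R, B' = B.compLeft (Algebra.lmul k R u) := by
  set u := (B.toDual hB).symm (B' 1)
  have hu : B u = B' 1 := (B.toDual hB).apply_symm_apply (B' 1)
  refine ⟨u, LinearMap.ext₂ fun x y => ?_⟩
  calc B' x y = B' 1 (x * y) := by rw [← hassoc', one_mul]
    _ = B (u * x) y := by rw [hassoc, hu]

end Frobenius

end LinearMap.BilinForm

/-- Let `(R, m)` be an even-dimensional local Frobenius `k`-algebra with `R/m ≅ k`
(encoded via `ε : R →ₐ[k] k` with units exactly the elements outside `m = ker ε`).
Then the determinant of a nondegenerate associative bilinear form on `R`, computed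
via its matrix in any basis and taken modulo nonzero squares, is independent of the
choice of the form and of the basis: for two such forms `B`, `B'` and bases `b`, `b'`,
the two determinants differ by a nonzero square. -/
theorem stmt19 (k : Type*) [Field k]
    (R : Type*) [Ring R] [Algebra k R] [FiniteDimensional k R]
    (ε : R →ₐ[k] k) (hlocal : ∀ y : R, IsUnit y ↔ ε y ≠ 0)
    (heven : Even (Module.finrank k R))
    (ι ι' : Type*) [Fintype ι] [DecidableEq ι] [Fintype ι'] [DecidableEq ι']
    (b : Module.Basis ι k R) (b' : Module.Basis ι' k R)
    (B B' : LinearMap.BilinForm k R)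
    (hnd : B.Nondegenerate) (hassoc : ∀ r s t : R, B (r * s) t = B r (s * t))
    (hnd' : B'.Nondegenerate) (hassoc' : ∀ r s t : R, B' (r * s) t = B' r (s * t)) :
    ∃ c : k, c ≠ 0 ∧
      (BilinForm.toMatrix b' B').det = c ^ 2 * (BilinForm.toMatrix b B).det := by
  unfold BilinForm.toMatrix
  obtain ⟨u, rfl⟩ := LinearMap.BilinForm.exists_eq_compLeft_lmul hnd hassoc hassoc'
  have hdet : (LinearMap.BilinForm.toMatrix b (B.compLeft (Algebra.lmul k R u))).det =
      ε u ^ finrank k R * (LinearMap.BilinForm.toMatrix b B).det := by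
    rw [LinearMap.BilinForm.det_toMatrix_compLeft, det_lmul_eq_pow ε fun y => (hlocal y).2]
  have hεu : ε u ≠ 0 := by
    have hne := (LinearMap.BilinForm.nondegenerate_iff_det_ne_zero b).mp hnd'
    rw [hdet] at hne
    have : Nontrivial R := ε.toRingHom.domain_nontrivial
    exact fun h => hne (by rw [h, zero_pow finrank_pos.ne', zero_mul])
  obtain ⟨c, hc, hbasis⟩ :=
    LinearMap.BilinForm.exists_det_toMatrix_eq_sq_mul b b' (B.compLeft (Algebra.lmul k R u))
  obtain ⟨m, hm⟩ := heven
  refine ⟨c * ε u ^ m, mul_ne_zero hc.ne_zero (pow_ne_zero m hεu), ?_⟩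
  rw [hbasis, hdet, hm]
  ring
end
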